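/- In a treatment-control completely randomized experiment with N units, N₁ ≥ 2 treated and N₀ = N − N₁ ≥ 2 controls, Neyman's variance estimator V̂ = Ŝ²(1)/N₁ + Ŝ²(0)/N₀ satisfies E[V̂] = S²(1)/N₁ + S²(0)/N₀, and consequently E[V̂] − Var(τ̂) = S²(τ)/N ≥ 0, i.e., V̂ is conservative in expectation for the variance of the difference-in-means estimator. -/

import Mathlib

/-!
The treated group is a simple random sample of size `N₁` from the `N` units and the control
group, its complement, one of size `N₀`. Counting the `n`-subsets that contain one or two given
units gives the first two moments of a sample total; from them, the within-sample variance is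
unbiased for `S²` and the sample mean has variance `(1/n - 1/N) S²`. Since `Ŷ(0)` is determined by
the treated sample, `τ̂` is, up to a constant, the treated-sample mean of `Y(1) + (N₁/N₀) Y(0)`, and
expanding `S²` of that combination through `S²(1)`, `S²(0)` and `S²(τ)` gives the bias `S²(τ)/N`.
-/

open Finset

/-- Expectation of `f` under the uniform distribution on the finite set `s`. -/
noncomputable def avgOver {α : Type*} (s : Finset α) (f : α → ℝ) : ℝ :=
  (∑ a ∈ s, f a) / (s.card : ℝ)

/-- Variance of `f` under the uniform distribution on the finite set `s`. -/
noncomputable def varOver {α : Type*} (s : Finset α) (f : α → ℝ) : ℝ :=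
  avgOver s fun a => (f a - avgOver s f) ^ 2

/-- Finite-population mean. -/
noncomputable def fpMean {N : ℕ} (Y : Fin N → ℝ) : ℝ := (∑ i, Y i) / (N : ℝ)

/-- Finite-population variance `S² = (N-1)⁻¹ Σᵢ (Yᵢ - Ȳ)²`. -/
noncomputable def fpVar {N : ℕ} (Y : Fin N → ℝ) : ℝ :=
  (∑ i, (Y i - fpMean Y) ^ 2) / ((N : ℝ) - 1)

/-- The set of treatment assignments: all subsets of the `N` units of size `N₁`. -/
def assignments (N N₁ : ℕ) : Finset (Finset (Fin N)) :=
  Finset.powersetCard N₁ Finset.univ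

/-- Observed outcome. -/
noncomputable def obsY {N : ℕ} (Y1 Y0 : Fin N → ℝ) (A : Finset (Fin N)) (i : Fin N) : ℝ :=
  if i ∈ A then Y1 i else Y0 i

/-- Treated-arm sample mean `Ŷ(1)`. -/
noncomputable def yhat1 {N : ℕ} (Y1 Y0 : Fin N → ℝ) (N₁ : ℕ) (A : Finset (Fin N)) : ℝ :=
  (∑ i, if i ∈ A then obsY Y1 Y0 A i else 0) / (N₁ : ℝ)

/-- Control-arm sample mean `Ŷ(0)`. -/
noncomputable def yhat0 {N : ℕ} (Y1 Y0 : Fin N → ℝ) (N₀ : ℕ) (A : Finset (Fin N)) : ℝ :=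
  (∑ i, if i ∉ A then obsY Y1 Y0 A i else 0) / (N₀ : ℝ)

/-- The difference-in-means estimator `τ̂`. -/
noncomputable def tauhat {N : ℕ} (Y1 Y0 : Fin N → ℝ) (N₁ N₀ : ℕ) (A : Finset (Fin N)) : ℝ :=
  yhat1 Y1 Y0 N₁ A - yhat0 Y1 Y0 N₀ A

/-- Treated-arm sample variance `Ŝ²(1) = (N₁-1)⁻¹ Σᵢ (Yᵢ - Ŷ(1))² 1{Zᵢ = 1}`. -/
noncomputable def s2hat1 {N : ℕ} (Y1 Y0 : Fin N → ℝ) (N₁ : ℕ) (A : Finset (Fin N)) : ℝ :=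
  (∑ i, if i ∈ A then (obsY Y1 Y0 A i - yhat1 Y1 Y0 N₁ A) ^ 2 else 0) / ((N₁ : ℝ) - 1)

/-- Control-arm sample variance `Ŝ²(0) = (N₀-1)⁻¹ Σᵢ (Yᵢ - Ŷ(0))² 1{Zᵢ = 0}`. -/
noncomputable def s2hat0 {N : ℕ} (Y1 Y0 : Fin N → ℝ) (N₀ : ℕ) (A : Finset (Fin N)) : ℝ :=
  (∑ i, if i ∉ A then (obsY Y1 Y0 A i - yhat0 Y1 Y0 N₀ A) ^ 2 else 0) / ((N₀ : ℝ) - 1)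

/-- Neyman's variance estimator `V̂ = Ŝ²(1)/N₁ + Ŝ²(0)/N₀`. -/
noncomputable def vhatNeyman {N : ℕ} (Y1 Y0 : Fin N → ℝ) (N₁ N₀ : ℕ) (A : Finset (Fin N)) : ℝ :=
  s2hat1 Y1 Y0 N₁ A / (N₁ : ℝ) + s2hat0 Y1 Y0 N₀ A / (N₀ : ℝ)

open scoped BigOperators

lemma avgOver_eq_expect {α : Type*} (s : Finset α) (f : α → ℝ) :
    avgOver s f = 𝔼 a ∈ s, f a :=
  (expect_eq_sum_div_card s f).symm

lemma avgOver_congr {α : Type*} {s : Finset α} {f g : α → ℝ} (h : ∀ a ∈ s, f a = g a) :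
    avgOver s f = avgOver s g := by
  simp only [avgOver, sum_congr rfl h]

lemma varOver_congr {α : Type*} {s : Finset α} {f g : α → ℝ} (h : ∀ a ∈ s, f a = g a) :
    varOver s f = varOver s g := by
  rw [varOver, varOver, avgOver_congr h]
  exact avgOver_congr fun a ha => by rw [h a ha]

lemma sum_sub_sum_div_card_sq {ι : Type*} (A : Finset ι) (f : ι → ℝ) :
    ∑ i ∈ A, (f i - (∑ j ∈ A, f j) / #A) ^ 2 = ∑ i ∈ A, f i ^ 2 - (∑ i ∈ A, f i) ^ 2 / #A := by
  rcases A.eq_empty_or_nonempty with rfl | hA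
  · simp
  have hcard : (#A : ℝ) ≠ 0 := by exact_mod_cast hA.card_ne_zero
  simp only [sub_sq, sum_add_distrib, sum_sub_distrib, ← sum_mul, ← mul_sum, sum_const,
    nsmul_eq_mul]
  field_simp
  ring

lemma varOver_eq_avgOver_sq_sub_sq {α : Type*} (s : Finset α) (f : α → ℝ) :
    varOver s f = avgOver s (fun a => f a ^ 2) - avgOver s f ^ 2 := by
  rw [varOver, avgOver, avgOver, avgOver, sum_sub_sum_div_card_sq]
  ring

lemma varOver_sub_const {α : Type*} (s : Finset α) (f : α → ℝ) (c : ℝ) :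
    varOver s (fun a => f a - c) = varOver s f := by
  rcases s.eq_empty_or_nonempty with rfl | hs
  · simp [varOver, avgOver]
  have hmean : avgOver s (fun a => f a - c) = avgOver s f - c := by
    simp [avgOver_eq_expect, expect_sub_distrib, hs]
  simp only [varOver, hmean, sub_sub_sub_cancel_right]

lemma fpVar_eq {N : ℕ} (Y : Fin N → ℝ) :
    fpVar Y = (∑ i, Y i ^ 2 - (∑ i, Y i) ^ 2 / N) / (N - 1) := by
  simpa [fpVar, fpMean] using congrArg (· / ((N : ℝ) - 1)) (sum_sub_sum_div_card_sq univ Y)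

lemma fpVar_nonneg {N : ℕ} (Y : Fin N → ℝ) : 0 ≤ fpVar Y := by
  rcases N with _ | N
  · simp [fpVar]
  exact div_nonneg (sum_nonneg fun i _ => sq_nonneg _) (by simp)

lemma fpVar_add_mul {N : ℕ} (X Y : Fin N → ℝ) (c : ℝ) :
    fpVar (fun i => X i + c * Y i)
      = (1 + c) * fpVar X + (c ^ 2 + c) * fpVar Y - c * fpVar (fun i => X i - Y i) := by
  have hmean : fpMean (fun i => X i + c * Y i) = fpMean X + c * fpMean Y := by
    simp only [fpMean, sum_add_distrib, ← mul_sum]; ring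
  have hmean' : fpMean (fun i => X i - Y i) = fpMean X - fpMean Y := by
    simp only [fpMean, sum_sub_distrib]; ring
  simp only [fpVar, hmean, hmean', mul_div_assoc', mul_sum, ← sum_add_distrib,
    ← sum_sub_distrib, ← add_div, ← sub_div]
  congr 1
  refine sum_congr rfl fun i _ => ?_
  ring

section Sampling

variable {ι : Type*} [Fintype ι] [DecidableEq ι] {n : ℕ}

lemma sum_sum_mem_eq_sum_card_mul (S : Finset (Finset ι)) (f : ι → ℝ) :
    ∑ A ∈ S, ∑ i ∈ A, f i = ∑ i, (#{A ∈ S | i ∈ A} : ℝ) * f i := by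
  calc ∑ A ∈ S, ∑ i ∈ A, f i = ∑ i, ∑ A ∈ S, if i ∈ A then f i else 0 := by
        rw [sum_comm]; simp [sum_ite_mem]
    _ = _ := by simp [← sum_filter]

lemma sum_sq_sum_mem_eq_sum_card_mul (S : Finset (Finset ι)) (f : ι → ℝ) :
    ∑ A ∈ S, (∑ i ∈ A, f i) ^ 2
      = ∑ i, ∑ j, (#{A ∈ S | i ∈ A ∧ j ∈ A} : ℝ) * (f i * f j) := by
  have hsq (A : Finset ι) :
      (∑ i ∈ A, f i) ^ 2 = ∑ i, ∑ j, if i ∈ A ∧ j ∈ A then f i * f j else 0 := by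
    simp [sq, sum_mul_sum, ite_and, sum_ite_mem]
  simp only [hsq]
  rw [sum_comm]
  refine sum_congr rfl fun i _ => ?_
  rw [sum_comm]
  simp [← sum_filter]

lemma card_filter_mem_powersetCard (hn : 1 ≤ n) (hnN : n ≤ Fintype.card ι) (i : ι) :
    (#{A ∈ powersetCard n univ | i ∈ A} : ℝ)
      = n / Fintype.card ι * #(powersetCard n (univ : Finset ι)) := by
  have hcount := card_filter_powersetCard_subset {i} univ n (subset_univ _) (by simpa using hn)
  have hchoose := congrArg (Nat.cast (R := ℝ)) (Nat.choose_mul (n := Fintype.card ι) (s := 1) hn)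
  simp only [singleton_subset_iff, card_singleton, card_univ] at hcount
  push_cast [Nat.choose_one_right] at hchoose
  have hN : (Fintype.card ι : ℝ) ≠ 0 := by norm_cast; omega
  rw [hcount, card_powersetCard, card_univ, div_mul_eq_mul_div, eq_div_iff hN]
  linear_combination -hchoose

lemma card_filter_mem_mem_powersetCard (hn : 2 ≤ n) (hnN : n ≤ Fintype.card ι) {i j : ι}
    (hij : i ≠ j) :
    (#{A ∈ powersetCard n univ | i ∈ A ∧ j ∈ A} : ℝ)
      = n * (n - 1) / (Fintype.card ι * (Fintype.card ι - 1))
        * #(powersetCard n (univ : Finset ι)) := by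
  have hcount := card_filter_powersetCard_subset {i, j} univ n (subset_univ _)
    (by rw [card_pair hij]; exact hn)
  have hchoose := congrArg (Nat.cast (R := ℝ)) (Nat.choose_mul (n := Fintype.card ι) (s := 2) hn)
  simp only [insert_subset_iff, singleton_subset_iff, card_pair hij, card_univ] at hcount
  push_cast [Nat.cast_choose_two] at hchoose
  have hN : (Fintype.card ι : ℝ) * (Fintype.card ι - 1) ≠ 0 := by
    have : (2 : ℝ) ≤ Fintype.card ι := by exact_mod_cast hn.trans hnN
    nlinarith
  rw [hcount, card_powersetCard, card_univ, div_mul_eq_mul_div, eq_div_iff hN]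
  linear_combination -2 * hchoose

omit [DecidableEq ι] in
lemma card_powersetCard_univ_ne_zero (hnN : n ≤ Fintype.card ι) :
    (#(powersetCard n (univ : Finset ι)) : ℝ) ≠ 0 := by
  rw [card_powersetCard, card_univ]
  exact_mod_cast (Nat.choose_pos hnN).ne'

lemma avgOver_powersetCard_sum_mem (hn : 1 ≤ n) (hnN : n ≤ Fintype.card ι) (f : ι → ℝ) :
    avgOver (powersetCard n univ) (fun A => ∑ i ∈ A, f i) = n / Fintype.card ι * ∑ i, f i := by
  rw [avgOver, sum_sum_mem_eq_sum_card_mul]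
  simp only [card_filter_mem_powersetCard hn hnN, mul_right_comm _ _ (f _), ← sum_mul, mul_sum]
  field_simp [card_powersetCard_univ_ne_zero hnN]

lemma avgOver_powersetCard_sq_sum_mem (hn : 2 ≤ n) (hnN : n ≤ Fintype.card ι) (f : ι → ℝ) :
    avgOver (powersetCard n univ) (fun A => (∑ i ∈ A, f i) ^ 2)
      = n / Fintype.card ι * ∑ i, f i ^ 2
        + n * (n - 1) / (Fintype.card ι * (Fintype.card ι - 1))
          * ((∑ i, f i) ^ 2 - ∑ i, f i ^ 2) := by
  set p₁ : ℝ := n / Fintype.card ι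
  set p₂ : ℝ := n * (n - 1) / (Fintype.card ι * (Fintype.card ι - 1))
  have hcount (i j : ι) : (#{A ∈ powersetCard n univ | i ∈ A ∧ j ∈ A} : ℝ)
      = (p₂ + if i = j then p₁ - p₂ else 0) * #(powersetCard n (univ : Finset ι)) := by
    by_cases hij : i = j
    · simp only [hij, and_self, if_true, add_sub_cancel]
      exact card_filter_mem_powersetCard (by omega) hnN j
    · simp only [hij, if_false, add_zero]
      exact card_filter_mem_mem_powersetCard hn hnN hij
  rw [avgOver, sum_sq_sum_mem_eq_sum_card_mul]
  simp only [hcount, add_mul, ite_mul, zero_mul, sum_add_distrib, sum_ite_eq, mem_univ, if_true,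
    mul_assoc, ← mul_sum, ← sum_mul, ← sq]
  field_simp [card_powersetCard_univ_ne_zero hnN]
  ring

lemma avgOver_powersetCard_compl {m : ℕ} (h : n + m = Fintype.card ι) (g : Finset ι → ℝ) :
    avgOver (powersetCard n univ) (fun A => g Aᶜ) = avgOver (powersetCard m univ) g := by
  simp only [avgOver_eq_expect]
  refine expect_nbij' compl compl ?_ ?_ (fun A _ => compl_compl A) (fun A _ => compl_compl A)
    (fun A _ => rfl) <;>
  · intro A hA
    simp only [mem_powersetCard_univ, card_compl] at hA ⊢
    omega

end Sampling

noncomputable def sampleMean {ι : Type*} (A : Finset ι) (f : ι → ℝ) : ℝ :=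
  (∑ i ∈ A, f i) / #A

noncomputable def sampleVar {ι : Type*} (A : Finset ι) (f : ι → ℝ) : ℝ :=
  (∑ i ∈ A, (f i - sampleMean A f) ^ 2) / (#A - 1)

lemma sampleVar_eq {ι : Type*} (A : Finset ι) (f : ι → ℝ) :
    sampleVar A f = (∑ i ∈ A, f i ^ 2 - (∑ i ∈ A, f i) ^ 2 / #A) / (#A - 1) := by
  rw [sampleVar, sampleMean, sum_sub_sum_div_card_sq]

section SimpleRandomSample

variable {N n : ℕ}

theorem avgOver_sampleVar (hn : 2 ≤ n) (hnN : n ≤ N) (f : Fin N → ℝ) :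
    avgOver (powersetCard n univ) (fun A => sampleVar A f) = fpVar f := by
  have hA : ∀ A ∈ powersetCard n (univ : Finset (Fin N)), sampleVar A f
      = ((∑ i ∈ A, f i ^ 2) - (∑ i ∈ A, f i) ^ 2 / n) / (n - 1) := fun A hmem => by
    rw [sampleVar_eq, (mem_powersetCard.1 hmem).2]
  have hnN' : n ≤ Fintype.card (Fin N) := by simpa using hnN
  rw [avgOver_congr hA]
  simp only [avgOver_eq_expect, ← expect_div, expect_sub_distrib]
  simp only [← avgOver_eq_expect, avgOver_powersetCard_sum_mem (by omega) hnN',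
    avgOver_powersetCard_sq_sum_mem hn hnN', Fintype.card_fin, fpVar_eq]
  have hn₂ : (2 : ℝ) ≤ n := by exact_mod_cast hn
  have hnN₂ : (n : ℝ) ≤ N := by exact_mod_cast hnN
  have hN : (N : ℝ) ≠ 0 := by linarith
  have hN₁ : (N : ℝ) - 1 ≠ 0 := by linarith
  have hn₁ : (n : ℝ) - 1 ≠ 0 := by linarith
  field_simp
  ring

theorem varOver_sampleMean (hn : 2 ≤ n) (hnN : n ≤ N) (f : Fin N → ℝ) :
    varOver (powersetCard n univ) (fun A => sampleMean A f) = (1 / n - 1 / N) * fpVar f := by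
  have hA : ∀ A ∈ powersetCard n (univ : Finset (Fin N)),
      sampleMean A f = (∑ i ∈ A, f i) / n := fun A hmem => by
    rw [sampleMean, (mem_powersetCard.1 hmem).2]
  have hnN' : n ≤ Fintype.card (Fin N) := by simpa using hnN
  rw [varOver_congr hA, varOver_eq_avgOver_sq_sub_sq]
  simp only [avgOver_eq_expect, div_pow, ← expect_div]
  simp only [← avgOver_eq_expect, avgOver_powersetCard_sum_mem (by omega) hnN',
    avgOver_powersetCard_sq_sum_mem hn hnN', Fintype.card_fin, fpVar_eq]
  have hn₂ : (2 : ℝ) ≤ n := by exact_mod_cast hn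
  have hnN₂ : (n : ℝ) ≤ N := by exact_mod_cast hnN
  have hN : (N : ℝ) ≠ 0 := by linarith
  have hN₁ : (N : ℝ) - 1 ≠ 0 := by linarith
  have hn₀ : (n : ℝ) ≠ 0 := by linarith
  field_simp
  ring

end SimpleRandomSample

section NeymanEstimator

variable {N : ℕ} (Y1 Y0 : Fin N → ℝ) {N₁ N₀ : ℕ} {A : Finset (Fin N)}

lemma yhat1_eq_sampleMean (hA : #A = N₁) : yhat1 Y1 Y0 N₁ A = sampleMean A Y1 := by
  rw [yhat1, sampleMean, hA, sum_ite_mem, univ_inter]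
  exact congrArg (· / _) (sum_congr rfl fun i hi => if_pos hi)

lemma yhat0_eq_sampleMean (hA : #Aᶜ = N₀) : yhat0 Y1 Y0 N₀ A = sampleMean Aᶜ Y0 := by
  simp_rw [yhat0, sampleMean, hA, ← mem_compl, sum_ite_mem, univ_inter]
  exact congrArg (· / _) (sum_congr rfl fun i hi => if_neg (mem_compl.1 hi))

lemma s2hat1_eq_sampleVar (hA : #A = N₁) : s2hat1 Y1 Y0 N₁ A = sampleVar A Y1 := by
  rw [s2hat1, sampleVar, hA, sum_ite_mem, univ_inter, yhat1_eq_sampleMean Y1 Y0 hA]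
  exact congrArg (· / _) (sum_congr rfl fun i hi => by rw [obsY, if_pos hi])

lemma s2hat0_eq_sampleVar (hA : #Aᶜ = N₀) : s2hat0 Y1 Y0 N₀ A = sampleVar Aᶜ Y0 := by
  simp_rw [s2hat0, sampleVar, hA, ← mem_compl, sum_ite_mem, univ_inter,
    yhat0_eq_sampleMean Y1 Y0 hA]
  exact congrArg (· / _) (sum_congr rfl fun i hi => by rw [obsY, if_neg (mem_compl.1 hi)])

lemma tauhat_eq_sampleMean_sub (hN₁ : N₁ ≠ 0) (hN₀ : N₀ ≠ 0) (hA : #A = N₁) (hAc : #Aᶜ = N₀) :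
    tauhat Y1 Y0 N₁ N₀ A
      = sampleMean A (fun i => Y1 i + N₁ / N₀ * Y0 i) - (∑ i, Y0 i) / N₀ := by
  rw [tauhat, yhat1_eq_sampleMean Y1 Y0 hA, yhat0_eq_sampleMean Y1 Y0 hAc, sampleMean,
    sampleMean, sampleMean, ← sum_compl_add_sum A Y0, hA, hAc, sum_add_distrib, ← mul_sum]
  field_simp
  ring

end NeymanEstimator

/-- Neyman's variance estimator satisfies `E[V̂] = S²(1)/N₁ + S²(0)/N₀`, hence
`E[V̂] - Var(τ̂) = S²(τ)/N ≥ 0`: it is conservative in expectation. -/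
theorem neyman_variance_estimator_conservative (N N₁ N₀ : ℕ) (hadd : N₁ + N₀ = N)
    (h1 : 2 ≤ N₁) (h0 : 2 ≤ N₀) (Y1 Y0 : Fin N → ℝ) :
    avgOver (assignments N N₁) (vhatNeyman Y1 Y0 N₁ N₀)
        = fpVar Y1 / (N₁ : ℝ) + fpVar Y0 / (N₀ : ℝ)
    ∧ avgOver (assignments N N₁) (vhatNeyman Y1 Y0 N₁ N₀)
        - varOver (assignments N N₁) (tauhat Y1 Y0 N₁ N₀)
        = fpVar (fun i => Y1 i - Y0 i) / (N : ℝ)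
    ∧ 0 ≤ fpVar (fun i => Y1 i - Y0 i) / (N : ℝ) := by
  have hcard : ∀ A ∈ assignments N N₁, #A = N₁ ∧ #Aᶜ = N₀ := fun A hA => by
    rw [assignments, mem_powersetCard_univ] at hA
    rw [card_compl, Fintype.card_fin]
    omega
  have hmean : avgOver (assignments N N₁) (vhatNeyman Y1 Y0 N₁ N₀)
      = fpVar Y1 / N₁ + fpVar Y0 / N₀ := by
    rw [avgOver_congr fun A hA => by rw [vhatNeyman, s2hat1_eq_sampleVar Y1 Y0 (hcard A hA).1,
      s2hat0_eq_sampleVar Y1 Y0 (hcard A hA).2]]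
    simp only [avgOver_eq_expect, expect_add_distrib, ← expect_div]
    simp only [← avgOver_eq_expect]
    rw [assignments, avgOver_powersetCard_compl (by simpa using hadd) (sampleVar · Y0),
      avgOver_sampleVar h1 (by omega), avgOver_sampleVar h0 (by omega)]
  have hvar : varOver (assignments N N₁) (tauhat Y1 Y0 N₁ N₀)
      = (1 / N₁ - 1 / N) * fpVar (fun i => Y1 i + N₁ / N₀ * Y0 i) := by
    rw [varOver_congr fun A hA => tauhat_eq_sampleMean_sub Y1 Y0 (by omega) (by omega)
      (hcard A hA).1 (hcard A hA).2, varOver_sub_const, assignments,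
      varOver_sampleMean h1 (by omega)]
  refine ⟨hmean, ?_, div_nonneg (fpVar_nonneg _) (Nat.cast_nonneg N)⟩
  have hN : (N : ℝ) = N₁ + N₀ := by rw [← hadd]; push_cast; ring
  have hN₁ : (N₁ : ℝ) ≠ 0 := by norm_cast; omega
  have hN₀ : (N₀ : ℝ) ≠ 0 := by norm_cast; omega
  rw [hmean, hvar, fpVar_add_mul, hN]
  field_simp
  ring
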